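/- Let X ⊆ ℝ^m and Y ⊆ ℝ^n be nonempty compact convex sets, A a q×n and B a q×m real matrix, b ∈ ℝ^q. Let f₀ : ℝ^n → ℝ and f₁ : ℝ^m → ℝ be convex and differentiable, and define 𝒬(x) = inf { f₀(y) + f₁(x) : y ∈ Y, Ay + Bx = b } and θ_x(λ) = inf_{y ∈ Y} { f₀(y) + f₁(x) + λᵀ(Ay + Bx − b) }. Assume for every x ∈ X there exists y_x ∈ Y (in the relative interior of Y when Y is not polyhedral) with Ay_x + Bx = b, and that θ_{x̄} is strongly concave with constant α_D(x̄) > 0 for ‖·‖₂ on a convex set D_{x̄} ⊆ ℝ^q containing all optimal solutions of sup_{λ ∈ ℝ^q} θ_{x̄}(λ). Fix x̄ ∈ X and ε ≥ 0; let ŷ ∈ Y with Aŷ + Bx̄ = b and f₀(ŷ) + f₁(x̄) ≤ 𝒬(x̄) + ε, and let λ̂ ∈ D_{x̄} with θ_{x̄}(λ̂) ≥ 𝒬(x̄) − ε. Set η(ε, x̄) = ε + ‖Bᵀ‖₂ · sqrt(2ε/α_D(x̄)) · Diam(X). Then the affine function C(x) = f₀(ŷ) + f₁(x̄) − η(ε,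 x̄) + ⟨∇f₁(x̄) + Bᵀλ̂, x − x̄⟩ satisfies 𝒬(x) ≥ C(x) for every x ∈ X, and 𝒬(x̄) − C(x̄) ≤ η(ε, x̄). -/

import Mathlib

/-!
Weak duality gives `𝒬(x) ≥ θ_x(λ)` for every `λ`. At `x̄` the dual problem has a maximizer `λ*`
with `θ_{x̄}(λ*) = 𝒬(x̄)`: for polyhedral `Y` this is the KKT theorem, obtained from Farkas'
lemma; otherwise the Slater point in the relative interior of `Y` yields an exact penalty
`L‖Ay + Bx̄ - b‖`, the penalized perturbation function is then finite and convex on all of `ℝ^q`,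
and `λ*` comes from a subgradient of it at `0`. As `λ*` lies in `D`, strong concavity of `θ_{x̄}`
and `θ_{x̄}(λ̂) ≥ θ_{x̄}(λ*) - ε` give `‖λ* - λ̂‖ ≤ √(2ε/α_D)`. The gradient inequality for `f₁`
turns `θ_x(λ*)` into `𝒬(x̄) + ⟨∇f₁(x̄) + Bᵀλ*, x - x̄⟩`, and replacing `λ*` by `λ̂` costs at most
`‖Bᵀ‖ · √(2ε/α_D) · Diam(X)`.
-/


open scoped RealInnerProductSpace Matrix
noncomputable section

/-- `ℝ^k` with the Euclidean norm. -/
abbrev E (k : ℕ) := EuclideanSpace ℝ (Fin k)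

/-- Reinterpret a plain vector of `ℝ^k` as an element of Euclidean space. -/
def toE {k : ℕ} (v : Fin k → ℝ) : E k := WithLp.toLp 2 v

/-- A polyhedral set: a finite intersection of closed half-spaces. -/
def IsPolyhedral {k : ℕ} (s : Set (E k)) : Prop :=
  ∃ (r : ℕ) (c : Fin r → E k) (d : Fin r → ℝ), s = {x : E k | ∀ i, ⟪c i, x⟫ ≤ d i}

/-- Strong concavity with constant `α` w.r.t. `‖·‖₂` on a set, at points where the function
is finite. -/
def StrongConcaveOnE {k : ℕ} (C : Set (E k)) (α : ℝ) (θ : E k → EReal) : Prop :=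
  ∀ ⦃u⦄, u ∈ C → θ u ≠ ⊤ → θ u ≠ ⊥ → ∀ ⦃v⦄, v ∈ C → θ v ≠ ⊤ → θ v ≠ ⊥ →
    ∀ t ∈ Set.Icc (0:ℝ) 1,
      ((t * (θ u).toReal + (1 - t) * (θ v).toReal
          + α * t * (1 - t) / 2 * ‖u - v‖ ^ 2 : ℝ) : EReal) ≤ θ (t • u + (1 - t) • v)

/-- The value function `𝒬(x) = inf { f₀(y) + f₁(x) : y ∈ Y, Ay + Bx = b }`. -/
def QvarLin {n m q : ℕ} (Y : Set (E n)) (A : Matrix (Fin q) (Fin n) ℝ)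
    (B : Matrix (Fin q) (Fin m) ℝ) (b : Fin q → ℝ)
    (f₀ : E n → ℝ) (f₁ : E m → ℝ) (x : E m) : EReal :=
  ⨅ (y : E n) (_ : y ∈ Y) (_ : A.mulVec y + B.mulVec x = b), ((f₀ y + f₁ x : ℝ) : EReal)

/-- The dual function `θ_x(λ) = inf_{y ∈ Y} { f₀(y) + f₁(x) + λᵀ(Ay + Bx − b) }`. -/
def thetaLin {n m q : ℕ} (Y : Set (E n)) (A : Matrix (Fin q) (Fin n) ℝ)
    (B : Matrix (Fin q) (Fin m) ℝ) (b : Fin q → ℝ)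
    (f₀ : E n → ℝ) (f₁ : E m → ℝ) (x : E m) (lam : E q) : EReal :=
  ⨅ (y : E n) (_ : y ∈ Y),
    ((f₀ y + f₁ x + (lam : Fin q → ℝ) ⬝ᵥ (A.mulVec y + B.mulVec x - b) : ℝ) : EReal)

open Set Filter Topology

section Subgradient
variable {F : Type*} [NormedAddCommGroup F] [InnerProductSpace ℝ F]

theorem ConvexOn.add_inner_gradient_le [CompleteSpace F] {f : F → ℝ} (hf : ConvexOn ℝ univ f)
    {x : F} (hd : DifferentiableAt ℝ f x) (y : F) : f x + ⟪gradient f x, y - x⟫ ≤ f y := by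
  have hline : ConvexOn ℝ univ (f ∘ AffineMap.lineMap (k := ℝ) x y) := by
    simpa using hf.comp_affineMap (AffineMap.lineMap (k := ℝ) x y)
  have hderiv : HasDerivAt (f ∘ AffineMap.lineMap (k := ℝ) x y) ⟪gradient f x, y - x⟫ 0 := by
    rw [inner_gradient_left]
    exact hd.hasFDerivAt.comp_hasDerivAt_of_eq 0 AffineMap.hasDerivAt_lineMap (by simp)
  have := hline.le_slope_of_hasDerivAt (mem_univ 0) (mem_univ 1) one_pos hderiv
  simp only [slope_def_field, Function.comp_apply, AffineMap.lineMap_apply_zero,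
    AffineMap.lineMap_apply_one, sub_zero, div_one] at this
  linarith

theorem ConvexOn.exists_subgradient [FiniteDimensional ℝ F] {w : F → ℝ} (hw : ConvexOn ℝ univ w)
    (u₀ : F) : ∃ g : F, ∀ u, w u₀ + ⟪g, u - u₀⟫ ≤ w u := by
  set epi : Set (F × ℝ) := {p | w p.1 < p.2}
  have hopen : IsOpen epi :=
    isOpen_lt (hw.locallyLipschitz.continuous.comp continuous_fst) continuous_snd
  have hconv : Convex ℝ epi := by
    simpa [epi] using hw.convex_strict_epigraph
  obtain ⟨φ, hφ⟩ := geometric_hahn_banach_open_point hconv hopen (x := (u₀, w u₀)) (by simp [epi])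
  set ψ : F →L[ℝ] ℝ := φ.comp (.inl ℝ F ℝ)
  set σ := φ (0, 1)
  have hsplit : ∀ u r, φ (u, r) = ψ u + r * σ := fun u r => by
    rw [show ((u, r) : F × ℝ) = (u, 0) + r • (0, 1) by simp, map_add, map_smul, smul_eq_mul]; rfl
  have hσ : σ < 0 := by
    have := hφ (u₀, w u₀ + 1) (by simp [epi])
    rw [hsplit, hsplit] at this
    linarith
  have key : ∀ u, ψ u - ψ u₀ ≤ (w u - w u₀) * -σ := fun u => by
    refine le_of_forall_pos_lt_add fun ε hε => ?_
    have hδ : 0 < ε / -σ := div_pos hε (neg_pos.2 hσ)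
    have := hφ (u, w u + ε / -σ) (by simp only [epi, mem_ofPred_eq]; linarith)
    rw [hsplit, hsplit, add_mul, show ε / -σ * σ = -ε by field_simp [hσ.ne]] at this
    linarith
  refine ⟨(InnerProductSpace.toDual ℝ F).symm ((-σ)⁻¹ • ψ), fun u => ?_⟩
  rw [InnerProductSpace.toDual_symm_apply, smul_apply, smul_eq_mul, map_sub]
  have : (-σ)⁻¹ * (ψ u - ψ u₀) ≤ w u - w u₀ := by
    rw [inv_mul_le_iff₀ (neg_pos.2 hσ)]; linarith [key u]
  linarith

end Subgradient

section Farkas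
variable {F : Type*} [NormedAddCommGroup F] [InnerProductSpace ℝ F] {ι : Type*}

def nonnegSpan (g : ι → F) (s : Finset ι) : Set F :=
  {x | ∃ μ : ι → ℝ, (∀ i ∈ s, 0 ≤ μ i) ∧ ∑ i ∈ s, μ i • g i = x}

theorem nonnegSpan_erase_subset [DecidableEq ι] (g : ι → F) (s : Finset ι) (j : ι) :
    nonnegSpan g (s.erase j) ⊆ nonnegSpan g s := by
  rintro _ ⟨μ, hμ, rfl⟩
  refine ⟨fun i => if i = j then 0 else μ i, fun i hi => ?_, ?_⟩
  · dsimp only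
    split_ifs with h
    exacts [le_rfl, hμ i (Finset.mem_erase.2 ⟨h, hi⟩)]
  · rw [← Finset.sum_erase s (a := j) (by simp)]
    exact Finset.sum_congr rfl fun i hi => by simp [Finset.ne_of_mem_erase hi]

/-- The conic Carathéodory step. -/
theorem nonnegSpan_subset_iUnion_erase [DecidableEq ι] {g : ι → F} {s : Finset ι}
    (h : ¬ LinearIndepOn ℝ g s) : nonnegSpan g s ⊆ ⋃ j ∈ s, nonnegSpan g (s.erase j) := by
  obtain ⟨d, hd, j, hjs, hj⟩ := not_linearIndepOn_finset_iff.1 h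
  wlog hdj : 0 < d j generalizing d
  · exact this (-d) (by simp [neg_smul, hd]) (by simpa) (neg_pos.2 (hj.lt_of_le (not_lt.1 hdj)))
  rintro _ ⟨μ, hμ, rfl⟩
  -- move from `μ` along `-d` until the first coefficient vanishes
  obtain ⟨i₀, hi₀, hmin⟩ := (s.filter (0 < d ·)).exists_min_image (fun i => μ i / d i)
    ⟨j, Finset.mem_filter.2 ⟨hjs, hdj⟩⟩
  rw [Finset.mem_filter] at hi₀
  set r := μ i₀ / d i₀
  have hr : 0 ≤ r := div_nonneg (hμ _ hi₀.1) hi₀.2.le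
  refine mem_biUnion hi₀.1 ⟨fun i => μ i - r * d i, fun i hi => ?_, ?_⟩
  · have his := Finset.mem_of_mem_erase hi
    rcases lt_or_ge 0 (d i) with hdi | hdi
    · have := hmin i (Finset.mem_filter.2 ⟨his, hdi⟩)
      rw [le_div_iff₀ hdi] at this
      linarith
    · nlinarith [hμ i his]
  · rw [Finset.sum_erase s (by simp [r, div_mul_cancel₀ _ hi₀.2.ne'])]
    simp [sub_smul, Finset.sum_sub_distrib, mul_smul, ← Finset.smul_sum, hd]

theorem isClosed_nonnegSpan_of_linearIndepOn {g : ι → F} {s : Finset ι}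
    (h : LinearIndepOn ℝ g s) : IsClosed (nonnegSpan g s) := by
  classical
  set L := Fintype.linearCombination ℝ (fun i : s => g i)
  have hL : nonnegSpan g s = L '' Ici 0 := by
    ext x
    simp only [nonnegSpan, mem_ofPred_eq, mem_image, mem_Ici, L, Fintype.linearCombination_apply]
    constructor
    · rintro ⟨μ, hμ, rfl⟩
      exact ⟨fun i => μ i, fun i => hμ i i.2, Finset.sum_coe_sort s fun i => μ i • g i⟩
    · rintro ⟨ν, hν, rfl⟩
      refine ⟨fun i => if hi : i ∈ s then ν ⟨i, hi⟩ else 0,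
        fun i hi => by simpa [hi] using hν ⟨i, hi⟩, ?_⟩
      rw [← Finset.sum_coe_sort s]
      simp
  rw [hL]
  exact (LinearMap.isClosedEmbedding_of_injective (LinearMap.ker_eq_bot.2
    h.fintypeLinearCombination_injective)).isClosedMap _ isClosed_Ici

theorem isClosed_nonnegSpan (g : ι → F) (s : Finset ι) : IsClosed (nonnegSpan g s) := by
  classical
  induction s using Finset.strongInduction with
  | H s ih =>
    by_cases h : LinearIndepOn ℝ g s
    · exact isClosed_nonnegSpan_of_linearIndepOn h
    rw [(nonnegSpan_subset_iUnion_erase h).antisymm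
      (iUnion₂_subset fun j _ => nonnegSpan_erase_subset g s j)]
    exact s.finite_toSet.isClosed_biUnion fun j hj => ih _ (Finset.erase_ssubset hj)

theorem exists_nonneg_sum_smul_eq_of_inner_nonpos [CompleteSpace F] [Fintype ι] (g : ι → F)
    {x : F} (h : ∀ z, (∀ i, ⟪g i, z⟫ ≤ 0) → ⟪x, z⟫ ≤ 0) :
    ∃ μ : ι → ℝ, (∀ i, 0 ≤ μ i) ∧ ∑ i, μ i • g i = x := by
  classical
  let C : ProperCone ℝ F :=
    { carrier := nonnegSpan g .univ
      add_mem' := by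
        rintro _ _ ⟨μ, hμ, rfl⟩ ⟨ν, hν, rfl⟩
        exact ⟨μ + ν, fun i hi => add_nonneg (hμ i hi) (hν i hi), by
          simp [add_smul, Finset.sum_add_distrib]⟩
      zero_mem' := ⟨0, by simp⟩
      smul_mem' := by
        rintro c _ ⟨μ, hμ, rfl⟩
        exact ⟨fun i => c * μ i, fun i hi => mul_nonneg c.2 (hμ i hi), by
          simp [Finset.smul_sum, mul_smul]⟩
      isClosed' := isClosed_nonnegSpan g .univ }
  by_contra hx
  obtain ⟨z, hzC, hxz⟩ := C.hyperplane_separation' (x₀ := x) (by simpa [C, nonnegSpan] using hx)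
  have hgz : ∀ i, ⟪g i, -z⟫ ≤ 0 := fun i => by
    have := hzC (g i) ⟨Pi.single i 1, fun j _ => by
      rw [Pi.single_apply]; split_ifs <;> norm_num, by simp⟩
    rw [inner_neg_right]
    linarith
  have := h (-z) hgz
  rw [inner_neg_right] at this
  linarith

theorem exists_nonneg_sum_smul_add_adjoint_eq [CompleteSpace F] [Fintype ι] {G : Type*}
    [NormedAddCommGroup G] [InnerProductSpace ℝ G] [FiniteDimensional ℝ G] (g : ι → F)
    (T : F →L[ℝ] G) {x : F} (h : ∀ z, (∀ i, ⟪g i, z⟫ ≤ 0) → T z = 0 → ⟪x, z⟫ ≤ 0) :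
    ∃ μ : ι → ℝ, (∀ i, 0 ≤ μ i) ∧ ∃ lam : G, ∑ i, μ i • g i + T.adjoint lam = x := by
  set b := stdOrthonormalBasis ℝ G
  -- the constraint `T z = 0` is encoded by the pairs of generators `± T† (b j)`
  set t := fun j => T.adjoint (b j)
  obtain ⟨μ, hμ, hx⟩ := exists_nonneg_sum_smul_eq_of_inner_nonpos
    (Sum.elim g (Sum.elim t (-t))) (x := x) fun z hz => by
      refine h z (fun i => hz (.inl i)) ?_
      have hbz : ∀ j, ⟪b j, T z⟫ = 0 := fun j => by
        have h₁ := hz (.inr (.inl j))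
        have h₂ := hz (.inr (.inr j))
        simp only [Sum.elim_inl, Sum.elim_inr, Pi.neg_apply, inner_neg_left, t,
          ContinuousLinearMap.adjoint_inner_left] at h₁ h₂
        linarith
      rw [← b.sum_repr' (T z)]
      simp [hbz]
  refine ⟨μ ∘ .inl, fun i => hμ _, ∑ j, (μ (.inr (.inl j)) - μ (.inr (.inr j))) • b j, ?_⟩
  rw [← hx]
  simp [Fintype.sum_sum_type, map_sum, map_smul, t, sub_eq_add_neg, add_smul,
    Finset.sum_add_distrib]

end Farkas

section Multipliers
variable {F G : Type*} [NormedAddCommGroup F] [InnerProductSpace ℝ F]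
  [NormedAddCommGroup G] [InnerProductSpace ℝ G]

theorem exists_multiplier_of_isMinOn_polyhedron [CompleteSpace F] [FiniteDimensional ℝ G]
    {ι : Type*} [Fintype ι] (c : ι → F) (d : ι → ℝ) {f : F → ℝ} (hfc : ConvexOn ℝ univ f)
    (T : F →L[ℝ] G) (c₀ : G) {y₀ : F} (hd : DifferentiableAt ℝ f y₀)
    (hy₀ : (∀ i, ⟪c i, y₀⟫ ≤ d i) ∧ T y₀ = c₀)
    (hmin : IsMinOn f {y | (∀ i, ⟪c i, y⟫ ≤ d i) ∧ T y = c₀} y₀) :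
    ∃ lam : G, ∀ y, (∀ i, ⟪c i, y⟫ ≤ d i) → f y₀ ≤ f y + ⟪lam, T y - c₀⟫ := by
  classical
  let active := {i // ⟪c i, y₀⟫ = d i}
  have hfermat : ∀ z, (∀ i : active, ⟪c i, z⟫ ≤ 0) → T z = 0 → ⟪-gradient f y₀, z⟫ ≤ 0 := by
    intro z hz hTz
    have hfeas : ∀ᶠ t in 𝓝[>] (0 : ℝ),
        y₀ + t • z ∈ {y | (∀ i, ⟪c i, y⟫ ≤ d i) ∧ T y = c₀} := by
      refine (eventually_all.2 fun i => ?_).and (.of_forall fun t => by simp [hTz, hy₀.2])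
      by_cases hi : ⟪c i, y₀⟫ = d i
      · filter_upwards [self_mem_nhdsWithin] with t (ht : 0 < t)
        rw [inner_add_right, inner_smul_right]
        nlinarith [hz ⟨i, hi⟩]
      · have hcont : Continuous fun t : ℝ => ⟪c i, y₀ + t • z⟫ := by fun_prop
        have := (hcont.tendsto 0).eventually_lt_const (by simpa using (hy₀.1 i).lt_of_ne hi)
        exact (eventually_nhdsWithin_of_eventually_nhds this).mono fun t ht => ht.le
    have := hmin.localize.hasFDerivWithinAt_nonneg hd.hasFDerivAt.hasFDerivWithinAt
      (mem_posTangentConeAt_of_frequently_mem hfeas.frequently)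
    rw [inner_neg_left, inner_gradient_left]
    linarith
  obtain ⟨μ, hμ, lam, hlam⟩ :=
    exists_nonneg_sum_smul_add_adjoint_eq (fun i : active => c i) T hfermat
  refine ⟨lam, fun y hy => ?_⟩
  have hactive : ∑ i : active, μ i * ⟪c i, y - y₀⟫ ≤ 0 :=
    Finset.sum_nonpos fun i _ => mul_nonpos_of_nonneg_of_nonpos (hμ i) (by
      rw [inner_sub_right, i.2]; linarith [hy i])
  have hgrad : ⟪gradient f y₀, y - y₀⟫ = -∑ i : active, μ i * ⟪c i, y - y₀⟫ - ⟪lam, T y - c₀⟫ := by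
    rw [← neg_neg (gradient f y₀), ← hlam, inner_neg_left, inner_add_left, sum_inner,
      ContinuousLinearMap.adjoint_inner_left, map_sub, hy₀.2]
    simp only [real_inner_smul_left, neg_add_rev]
    ring
  have := hfc.add_inner_gradient_le hd y
  linarith

theorem LinearMap.exists_preimage_norm_le {V W : Type*} [NormedAddCommGroup V] [NormedSpace ℝ V]
    [FiniteDimensional ℝ V] [NormedAddCommGroup W] [NormedSpace ℝ W] (T : V →ₗ[ℝ] W) :
    ∃ C > 0, ∀ w ∈ LinearMap.range T, ∃ v, T v = w ∧ ‖v‖ ≤ C * ‖w‖ := by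
  obtain ⟨C, hC, h⟩ := (LinearMap.toContinuousLinearMap T.rangeRestrict).exists_preimage_norm_le
    T.surjective_rangeRestrict
  exact ⟨C, hC, fun w hw => by
    obtain ⟨v, hv, hvC⟩ := h ⟨w, hw⟩
    exact ⟨v, congrArg Subtype.val hv, hvC⟩⟩

theorem exists_vadd_mem_of_mem_intrinsicInterior {Y : Set F} {y₀ : F}
    (h : y₀ ∈ intrinsicInterior ℝ Y) : ∃ ε > 0, ∀ v ∈ vectorSpan ℝ Y, ‖v‖ < ε → v + y₀ ∈ Y := by
  obtain ⟨z, hz, rfl⟩ := mem_intrinsicInterior.1 h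
  obtain ⟨ε, hε, hball⟩ := Metric.mem_nhds_iff.1 (mem_interior_iff_mem_nhds.1 hz)
  refine ⟨ε, hε, fun v hv hvε => ?_⟩
  have hmem : v + (z : F) ∈ affineSpan ℝ Y :=
    AffineSubspace.vadd_mem_of_mem_direction (by rwa [direction_affineSpan]) z.2
  have : (⟨v + z, hmem⟩ : affineSpan ℝ Y) ∈ Metric.ball z ε := by
    simpa [Subtype.dist_eq, dist_eq_norm] using hvε
  exact hball this

theorem exists_smul_mem_image_of_mem_intrinsicInterior [FiniteDimensional ℝ F] {Y : Set F}
    {y₀ : F} (h : y₀ ∈ intrinsicInterior ℝ Y) (T : F →L[ℝ] G) :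
    ∃ ρ > 0, ∀ y ∈ Y, ∀ s : ℝ, ‖s • T (y - y₀)‖ ≤ ρ → ∃ y' ∈ Y, T (y' - y₀) = s • T (y - y₀) := by
  obtain ⟨ε, hε, hball⟩ := exists_vadd_mem_of_mem_intrinsicInterior h
  obtain ⟨C, hC, hsec⟩ := ((T : F →ₗ[ℝ] G).comp (vectorSpan ℝ Y).subtype).exists_preimage_norm_le
  refine ⟨ε / (2 * C), by positivity, fun y hy s hs => ?_⟩
  have hdir : s • (y - y₀) ∈ vectorSpan ℝ Y :=
    Submodule.smul_mem _ _ (vsub_mem_vectorSpan ℝ hy (intrinsicInterior_subset h))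
  obtain ⟨v, hv, hvC⟩ := hsec (s • T (y - y₀)) ⟨⟨_, hdir⟩, by simp⟩
  refine ⟨v + y₀, hball v v.2 ?_, by simpa using hv⟩
  calc ‖(v : F)‖ ≤ C * (ε / (2 * C)) := hvC.trans (by gcongr)
    _ < ε := by field_simp; linarith

theorem exists_penalty_of_mem_intrinsicInterior [FiniteDimensional ℝ F] {Y : Set F}
    (hYc : IsCompact Y) (hYcv : Convex ℝ Y) {f : F → ℝ} (hfc : ConvexOn ℝ Y f)
    (hf : ContinuousOn f Y) (T : F →L[ℝ] G) (c₀ : G) {ys y₀ : F}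
    (hys : ys ∈ intrinsicInterior ℝ Y) (hTys : T ys = c₀)
    (hmin : IsMinOn f {y ∈ Y | T y = c₀} y₀) :
    ∃ L ≥ 0, ∀ y ∈ Y, f y₀ ≤ f y + L * ‖T y - c₀‖ := by
  obtain ⟨ρ, hρ, hreach⟩ := exists_smul_mem_image_of_mem_intrinsicInterior hys T
  have hysY := intrinsicInterior_subset hys
  obtain ⟨ymax, -, hmax⟩ := hYc.exists_isMaxOn ⟨ys, hysY⟩ hf
  have hM : f y₀ ≤ f ymax := (hmin ⟨hysY, hTys⟩).trans (hmax hysY)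
  refine ⟨(f ymax - f y₀) / ρ, div_nonneg (sub_nonneg.2 hM) hρ.le, fun y hy => ?_⟩
  have hu : T y - c₀ = T (y - ys) := by rw [map_sub, hTys]
  set u := T y - c₀
  rcases eq_or_ne u 0 with hu0 | hu0
  · simpa [hu0] using hmin ⟨hy, sub_eq_zero.1 hu0⟩
  have hupos : 0 < ‖u‖ := norm_pos_iff.2 hu0
  -- the point `y'` with `T y' - c₀ = -(ρ / ‖u‖) • u` is pulled back to `c₀` by a convex
  -- combination with `y`
  obtain ⟨y', hy', hTy'⟩ := hreach y hy (-(ρ / ‖u‖)) (by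
    rw [← hu, norm_smul, norm_neg, Real.norm_of_nonneg (by positivity),
      div_mul_cancel₀ _ hupos.ne'])
  set a := ρ / (ρ + ‖u‖)
  set b := ‖u‖ / (ρ + ‖u‖)
  have hab : a + b = 1 := by simp only [a, b]; field_simp
  have hfeas : T (a • y + b • y') = c₀ := by
    rw [map_sub, hTys] at hTy'
    have hTy : T y = u + c₀ := by simp [u]
    have hba : b * (ρ / ‖u‖) = a := by simp only [a, b]; field_simp
    rw [← sub_eq_zero, map_add, map_smul, map_smul, ← sub_add_cancel (T y') c₀, hTy', ← hu, hTy]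
    linear_combination (norm := module) hab • c₀ - hba • u
  have key : (ρ + ‖u‖) * f y₀ ≤ ρ * f y + ‖u‖ * f ymax :=
    calc (ρ + ‖u‖) * f y₀ ≤ (ρ + ‖u‖) * (a * f y + b * f y') := by
          gcongr
          exact (hmin ⟨hYcv hy hy' (by positivity) (by positivity) hab, hfeas⟩).trans
            (hfc.2 hy hy' (by positivity) (by positivity) hab)
      _ = ρ * f y + ‖u‖ * f y' := by simp only [a, b]; field_simp
      _ ≤ ρ * f y + ‖u‖ * f ymax := by gcongr; exact hmax hy'
  rw [div_mul_eq_mul_div, ← sub_le_iff_le_add', le_div_iff₀ hρ]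
  linarith

/-- The inf-convolution of the perturbation function `u ↦ inf {f y | y ∈ Y, T y - c₀ = u}` with
`L‖·‖`. Unlike the perturbation function, it is finite and convex on all of `G`. -/
def penalizedValue (f : F → ℝ) (Y : Set F) (T : F →L[ℝ] G) (c₀ : G) (L : ℝ) (u : G) : ℝ :=
  sInf ((fun y => f y + L * ‖u - (T y - c₀)‖) '' Y)

variable {f : F → ℝ} {Y : Set F} (T : F →L[ℝ] G) (c₀ : G) (L : ℝ)

theorem isLeast_penalizedValue (hYc : IsCompact Y) (hYne : Y.Nonempty) (hf : ContinuousOn f Y)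
    (u : G) :
    IsLeast ((fun y => f y + L * ‖u - (T y - c₀)‖) '' Y) (penalizedValue f Y T c₀ L u) := by
  obtain ⟨y, hy, hmin⟩ := hYc.exists_isMinOn hYne
    (hf.add (Continuous.continuousOn (by fun_prop : Continuous fun y => L * ‖u - (T y - c₀)‖)))
  have hleast : IsLeast ((fun y => f y + L * ‖u - (T y - c₀)‖) '' Y)
      (f y + L * ‖u - (T y - c₀)‖) :=
    ⟨mem_image_of_mem _ hy, forall_mem_image.2 fun y' hy' => hmin hy'⟩
  rwa [penalizedValue, hleast.csInf_eq]

theorem convexOn_penalizedValue (hYc : IsCompact Y) (hYne : Y.Nonempty) (hYcv : Convex ℝ Y)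
    (hfc : ConvexOn ℝ Y f) (hf : ContinuousOn f Y) (hL : 0 ≤ L) :
    ConvexOn ℝ univ (penalizedValue f Y T c₀ L) := by
  refine ⟨convex_univ, fun u₁ _ u₂ _ a b ha hb hab => ?_⟩
  obtain ⟨y₁, hy₁, e₁⟩ := (isLeast_penalizedValue T c₀ L hYc hYne hf u₁).1
  obtain ⟨y₂, hy₂, e₂⟩ := (isLeast_penalizedValue T c₀ L hYc hYne hf u₂).1
  rw [← e₁, ← e₂]
  have hres : a • u₁ + b • u₂ - (T (a • y₁ + b • y₂) - c₀)
      = a • (u₁ - (T y₁ - c₀)) + b • (u₂ - (T y₂ - c₀)) := by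
    rw [map_add, map_smul, map_smul]
    linear_combination (norm := module) -(hab • c₀)
  calc penalizedValue f Y T c₀ L (a • u₁ + b • u₂)
      ≤ f (a • y₁ + b • y₂) + L * ‖a • u₁ + b • u₂ - (T (a • y₁ + b • y₂) - c₀)‖ :=
        (isLeast_penalizedValue T c₀ L hYc hYne hf _).2
          (mem_image_of_mem _ (hYcv hy₁ hy₂ ha hb hab))
    _ ≤ (a • f y₁ + b • f y₂) + L * (a • ‖u₁ - (T y₁ - c₀)‖ + b • ‖u₂ - (T y₂ - c₀)‖) := by
        rw [hres]
        gcongr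
        exacts [hfc.2 hy₁ hy₂ ha hb hab, convexOn_univ_norm.2 trivial trivial ha hb hab]
    _ = _ := by simp only [smul_eq_mul]; ring

theorem exists_multiplier_of_mem_intrinsicInterior [FiniteDimensional ℝ F] [FiniteDimensional ℝ G]
    (hYc : IsCompact Y) (hYcv : Convex ℝ Y) (hfc : ConvexOn ℝ Y f) (hf : ContinuousOn f Y)
    {ys y₀ : F} (hys : ys ∈ intrinsicInterior ℝ Y) (hTys : T ys = c₀)
    (hmin : IsMinOn f {y ∈ Y | T y = c₀} y₀) :
    ∃ lam : G, ∀ y ∈ Y, f y₀ ≤ f y + ⟪lam, T y - c₀⟫ := by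
  have hYne : Y.Nonempty := ⟨ys, intrinsicInterior_subset hys⟩
  obtain ⟨L, hL, hpen⟩ := exists_penalty_of_mem_intrinsicInterior hYc hYcv hfc hf T c₀ hys hTys hmin
  obtain ⟨g, hg⟩ := (convexOn_penalizedValue T c₀ L hYc hYne hYcv hfc hf hL).exists_subgradient 0
  refine ⟨-g, fun y hy => ?_⟩
  have h0 : f y₀ ≤ penalizedValue f Y T c₀ L 0 := by
    obtain ⟨y₁, hy₁, heq⟩ := (isLeast_penalizedValue T c₀ L hYc hYne hf 0).1
    rw [← heq]
    simpa [norm_sub_rev] using hpen y₁ hy₁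
  have h1 : penalizedValue f Y T c₀ L (T y - c₀) ≤ f y := by
    simpa using (isLeast_penalizedValue T c₀ L hYc hYne hf (T y - c₀)).2 (mem_image_of_mem _ hy)
  have := hg (T y - c₀)
  rw [sub_zero] at this
  rw [inner_neg_left]
  linarith

end Multipliers

theorem exists_isMinOn_multiplier_of_slater {k : ℕ} {G : Type*} [NormedAddCommGroup G]
    [InnerProductSpace ℝ G] [FiniteDimensional ℝ G] {Y : Set (E k)} (hYc : IsCompact Y)
    (hYcv : Convex ℝ Y) {f : E k → ℝ} (hfc : ConvexOn ℝ univ f) (hfd : Differentiable ℝ f)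
    (T : E k →L[ℝ] G) (c₀ : G)
    (hslater : ∃ y ∈ Y, (¬ IsPolyhedral Y → y ∈ intrinsicInterior ℝ Y) ∧ T y = c₀) :
    ∃ y₀ ∈ Y, T y₀ = c₀ ∧ IsMinOn f {y ∈ Y | T y = c₀} y₀ ∧
      ∃ lam : G, ∀ y ∈ Y, f y₀ ≤ f y + ⟪lam, T y - c₀⟫ := by
  obtain ⟨ys, hysY, hysri, hTys⟩ := hslater
  obtain ⟨y₀, ⟨hy₀Y, hTy₀⟩, hmin⟩ :=
    (hYc.inter_right (isClosed_eq T.continuous continuous_const)).exists_isMinOn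
      ⟨ys, hysY, hTys⟩ hfd.continuous.continuousOn
  refine ⟨y₀, hy₀Y, hTy₀, hmin, ?_⟩
  by_cases hpoly : IsPolyhedral Y
  · obtain ⟨r, c, d, rfl⟩ := hpoly
    exact exists_multiplier_of_isMinOn_polyhedron c d hfc T c₀ (hfd y₀) ⟨hy₀Y, hTy₀⟩ hmin
  · exact exists_multiplier_of_mem_intrinsicInterior T c₀ hYc hYcv (hfc.subset (subset_univ _) hYcv)
      hfd.continuous.continuousOn (hysri hpoly) hTys hmin

theorem StrongConcaveOnE.norm_sub_le_sqrt {k : ℕ} {D : Set (E k)} {α : ℝ} {θ : E k → EReal}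
    (hθ : StrongConcaveOnE D α θ) (hα : 0 < α) {u v : E k} (hu : u ∈ D) (hv : v ∈ D)
    {a ε : ℝ} (hθu : θ u = a) (hmax : ∀ l, θ l ≤ a) (hθv : ((a - ε : ℝ) : EReal) ≤ θ v) :
    ‖u - v‖ ≤ √(2 * ε / α) := by
  obtain ⟨b, hb⟩ : ∃ b : ℝ, θ v = b :=
    ⟨_, (EReal.coe_toReal ((hmax v).trans_lt (EReal.coe_lt_top a)).ne
      ((EReal.bot_lt_coe _).trans_le hθv).ne').symm⟩
  rw [hb, EReal.coe_le_coe_iff] at hθv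
  have hconc : ∀ t ∈ Icc (0 : ℝ) 1,
      t * a + (1 - t) * b + α * t * (1 - t) / 2 * ‖u - v‖ ^ 2 ≤ a := by
    intro t ht
    have := (hθ hu (by simp [hθu]) (by simp [hθu]) hv (by simp [hb]) (by simp [hb]) t ht).trans
      (hmax _)
    rwa [hθu, hb, EReal.toReal_coe, EReal.toReal_coe, EReal.coe_le_coe_iff] at this
  -- dividing the strong concavity inequality by `1 - t` and letting `t → 1`
  have hlim : Tendsto (fun t => α * t * ‖u - v‖ ^ 2 / 2) (𝓝[<] 1) (𝓝 (α * 1 * ‖u - v‖ ^ 2 / 2)) :=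
    (Continuous.tendsto (by fun_prop) 1).mono_left nhdsWithin_le_nhds
  have hbound : α * ‖u - v‖ ^ 2 / 2 ≤ ε := by
    refine le_of_tendsto (by simpa using hlim) ?_
    filter_upwards [Ioo_mem_nhdsLT one_pos] with t ht
    have := hconc t ⟨ht.1.le, ht.2.le⟩
    have h1t : 0 < 1 - t := sub_pos.2 ht.2
    nlinarith
  rw [← Real.sqrt_sq (norm_nonneg _)]
  exact Real.sqrt_le_sqrt (by rw [le_div_iff₀ hα]; linarith)

section ParametricProblem
variable {n m q : ℕ} {Y : Set (E n)} {A : Matrix (Fin q) (Fin n) ℝ} {B : Matrix (Fin q) (Fin m) ℝ}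
  {b : Fin q → ℝ} {f₀ : E n → ℝ} {f₁ : E m → ℝ}

theorem coe_le_QvarLin_iff {x : E m} {a : ℝ} : (a : EReal) ≤ QvarLin Y A B b f₀ f₁ x ↔
    ∀ y ∈ Y, A *ᵥ y + B *ᵥ x = b → a ≤ f₀ y + f₁ x := by
  simp only [QvarLin, le_iInf_iff, EReal.coe_le_coe_iff]

theorem coe_le_thetaLin_iff {x : E m} {lam : E q} {a : ℝ} :
    (a : EReal) ≤ thetaLin Y A B b f₀ f₁ x lam ↔
      ∀ y ∈ Y, a ≤ f₀ y + f₁ x + lam ⬝ᵥ (A *ᵥ y + B *ᵥ x - b) := by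
  simp only [thetaLin, le_iInf_iff, EReal.coe_le_coe_iff]

theorem QvarLin_le {x : E m} {y : E n} (hy : y ∈ Y) (hfeas : A *ᵥ y + B *ᵥ x = b) :
    QvarLin Y A B b f₀ f₁ x ≤ (f₀ y + f₁ x : ℝ) :=
  iInf₂_le_of_le y hy (iInf_le_of_le hfeas le_rfl)

theorem thetaLin_le_QvarLin (x : E m) (lam : E q) :
    thetaLin Y A B b f₀ f₁ x lam ≤ QvarLin Y A B b f₀ f₁ x :=
  le_iInf₂ fun y hy => le_iInf fun hfeas => iInf₂_le_of_le y hy (by simp [hfeas])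

theorem exists_QvarLin_eq_thetaLin (hYc : IsCompact Y) (hYcv : Convex ℝ Y)
    (hf₀c : ConvexOn ℝ univ f₀) (hf₀d : Differentiable ℝ f₀) {x : E m}
    (hslater : ∃ y ∈ Y, (¬ IsPolyhedral Y → y ∈ intrinsicInterior ℝ Y) ∧ A *ᵥ y + B *ᵥ x = b) :
    ∃ (Q : ℝ) (lam : E q), QvarLin Y A B b f₀ f₁ x = Q ∧ thetaLin Y A B b f₀ f₁ x lam = Q := by
  set T : E n →L[ℝ] E q := LinearMap.toContinuousLinearMap (Matrix.toEuclideanLin A)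
  set c₀ : E q := toE (b - B *ᵥ x)
  have hres : ∀ y, T y - c₀ = toE (A *ᵥ y + B *ᵥ x - b) := fun y => by
    ext i
    simp only [LinearMap.coe_toContinuousLinearMap', toE, WithLp.toLp_sub, PiLp.sub_apply,
      Matrix.ofLp_toLpLin, Matrix.toLin'_apply, WithLp.toLp_add, PiLp.add_apply, T, c₀]
    ring
  have hfeas : ∀ y, T y = c₀ ↔ A *ᵥ y + B *ᵥ x = b := fun y => by
    rw [← sub_eq_zero, hres, ← sub_eq_zero (a := A *ᵥ y + B *ᵥ x)]
    exact ⟨fun h => congrArg WithLp.ofLp h, fun h => congrArg (WithLp.toLp 2) h⟩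
  obtain ⟨y₀, hy₀, hTy₀, hmin, lam, hlam⟩ :=
    exists_isMinOn_multiplier_of_slater hYc hYcv hf₀c hf₀d T c₀
      (by simpa only [hfeas] using hslater)
  refine ⟨f₀ y₀ + f₁ x, lam, le_antisymm (QvarLin_le hy₀ ((hfeas _).1 hTy₀)) ?_,
    le_antisymm ((thetaLin_le_QvarLin x lam).trans (QvarLin_le hy₀ ((hfeas _).1 hTy₀))) ?_⟩
  · refine coe_le_QvarLin_iff.2 fun y hy hfs => ?_
    have : f₀ y₀ ≤ f₀ y := hmin ⟨hy, (hfeas y).2 hfs⟩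
    linarith
  · refine coe_le_thetaLin_iff.2 fun y hy => ?_
    have := hlam y hy
    rw [hres] at this
    simp only [toE, EuclideanSpace.inner_eq_star_dotProduct, star_trivial, dotProduct_comm] at this
    linarith

theorem inner_toE_transpose_mulVec (lam : E q) (v : E m) :
    ⟪toE (Bᵀ *ᵥ lam), v⟫ = lam ⬝ᵥ (B *ᵥ v) := by
  simp [toE, EuclideanSpace.inner_eq_star_dotProduct, Matrix.mulVec_transpose,
    Matrix.dotProduct_mulVec, dotProduct_comm]

theorem abs_inner_toE_transpose_mulVec_sub_le {l l' : E q} {v : E m} {r R : ℝ}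
    (hl : ‖l - l'‖ ≤ r) (hv : ‖v‖ ≤ R) :
    |⟪toE (Bᵀ *ᵥ l) - toE (Bᵀ *ᵥ l'), v⟫|
      ≤ ‖LinearMap.toContinuousLinearMap (Matrix.toEuclideanLin Bᵀ)‖ * r * R := by
  set Bop := LinearMap.toContinuousLinearMap (Matrix.toEuclideanLin Bᵀ)
  have hBop : toE (Bᵀ *ᵥ l) - toE (Bᵀ *ᵥ l') = Bop (l - l') := by
    ext i; simp [Bop, toE]
  have hr : 0 ≤ r := (norm_nonneg _).trans hl
  calc _ ≤ ‖Bop (l - l')‖ * ‖v‖ := by rw [hBop]; exact abs_real_inner_le_norm _ _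
    _ ≤ ‖Bop‖ * ‖l - l'‖ * ‖v‖ := by gcongr; exact Bop.le_opNorm _
    _ ≤ ‖Bop‖ * r * R := by gcongr

theorem coe_add_inner_le_QvarLin (hf₁c : ConvexOn ℝ univ f₁) (hf₁d : Differentiable ℝ f₁)
    {xb : E m} {lam : E q} {Q : ℝ} (hQ : (Q : EReal) ≤ thetaLin Y A B b f₀ f₁ xb lam) (x : E m) :
    ((Q + ⟪gradient f₁ xb + toE (Bᵀ *ᵥ lam), x - xb⟫ : ℝ) : EReal) ≤ QvarLin Y A B b f₀ f₁ x := by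
  refine le_trans (coe_le_thetaLin_iff.2 fun y hy => ?_) (thetaLin_le_QvarLin x lam)
  have hgrad := hf₁c.add_inner_gradient_le (hf₁d xb) x
  have hsplit : lam ⬝ᵥ (A *ᵥ y + B *ᵥ x - b)
      = lam ⬝ᵥ (A *ᵥ y + B *ᵥ xb - b) + ⟪toE (Bᵀ *ᵥ lam), x - xb⟫ := by
    rw [inner_toE_transpose_mulVec, ← dotProduct_add]
    congr 1
    simp only [WithLp.ofLp_sub, Matrix.mulVec_sub]
    abel
  rw [inner_add_left, hsplit]
  linarith [coe_le_thetaLin_iff.1 hQ y hy]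

end ParametricProblem

theorem inexact_cut_separable_linear
    {n m q : ℕ} (X : Set (E m)) (Y : Set (E n))
    (hYcp : IsCompact Y) (hYcv : Convex ℝ Y)
    (A : Matrix (Fin q) (Fin n) ℝ) (B : Matrix (Fin q) (Fin m) ℝ) (b : Fin q → ℝ)
    (f₀ : E n → ℝ) (hf₀c : ConvexOn ℝ Set.univ f₀) (hf₀d : Differentiable ℝ f₀)
    (f₁ : E m → ℝ) (hf₁c : ConvexOn ℝ Set.univ f₁) (hf₁d : Differentiable ℝ f₁)
    -- Slater-type condition
    (hslater : ∀ x ∈ X, ∃ y ∈ Y, (¬ IsPolyhedral Y → y ∈ intrinsicInterior ℝ Y) ∧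
      A.mulVec y + B.mulVec x = b)
    (xb : E m) (hxb : xb ∈ X)
    (ε : ℝ)
    -- strong concavity of the dual function on D_x̄ containing the dual optimal solutions
    (αD : ℝ) (hαD : 0 < αD) (D : Set (E q))
    (hDopt : ∀ lam : E q,
      (∀ lam' : E q, thetaLin Y A B b f₀ f₁ xb lam' ≤ thetaLin Y A B b f₀ f₁ xb lam) →
      lam ∈ D)
    (hconc : StrongConcaveOnE D αD (thetaLin Y A B b f₀ f₁ xb))
    -- ŷ: ε-optimal feasible primal solution at x̄
    (yh : E n) (hyhY : yh ∈ Y) (hyhlin : A.mulVec yh + B.mulVec xb = b)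
    (hyheps : ((f₀ yh + f₁ xb : ℝ) : EReal) ≤ QvarLin Y A B b f₀ f₁ xb + (ε : EReal))
    -- λ̂ ∈ D_x̄: ε-optimal dual solution at x̄
    (lamh : E q) (hinD : lamh ∈ D)
    (hdualeps : QvarLin Y A B b f₀ f₁ xb - (ε : EReal) ≤ thetaLin Y A B b f₀ f₁ xb lamh)
    -- Diam(X)
    (Dm : ℝ) (hDm : IsGreatest ((fun pr : E m × E m => ‖pr.2 - pr.1‖) '' (X ×ˢ X)) Dm) :
    let η : ℝ := ε + ‖LinearMap.toContinuousLinearMap (Matrix.toEuclideanLin Bᵀ)‖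
        * Real.sqrt (2 * ε / αD) * Dm
    let s : E m := gradient f₁ xb + toE (Bᵀ.mulVec lamh)
    (∀ x ∈ X,
      ((f₀ yh + f₁ xb - η + ⟪s, x - xb⟫ : ℝ) : EReal) ≤ QvarLin Y A B b f₀ f₁ x) ∧
    QvarLin Y A B b f₀ f₁ xb ≤ ((f₀ yh + f₁ xb - η + ⟪s, xb - xb⟫ + η : ℝ) : EReal) := by
  intro η s
  obtain ⟨Q, lamS, hQ, hθS⟩ := exists_QvarLin_eq_thetaLin hYcp hYcv hf₀c hf₀d (hslater xb hxb)
  have hθle : ∀ l, thetaLin Y A B b f₀ f₁ xb l ≤ Q := fun l => hQ ▸ thetaLin_le_QvarLin xb l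
  have hdist : ‖lamS - lamh‖ ≤ √(2 * ε / αD) :=
    hconc.norm_sub_le_sqrt hαD (hDopt lamS fun l => hθS ▸ hθle l) hinD hθS hθle
      (by rwa [hQ, ← EReal.coe_sub] at hdualeps)
  refine ⟨fun x hx => (coe_add_inner_le_QvarLin hf₁c hf₁d hθS.ge x).trans' ?_,
    by simpa using QvarLin_le hyhY hyhlin⟩
  have hB := abs_inner_toE_transpose_mulVec_sub_le (B := B) hdist
    (hDm.2 ⟨(xb, x), ⟨hxb, hx⟩, rfl⟩)
  have hyh : f₀ yh + f₁ xb ≤ Q + ε := by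
    rwa [hQ, ← EReal.coe_add, EReal.coe_le_coe_iff] at hyheps
  rw [EReal.coe_le_coe_iff]
  simp only [η, s, inner_add_left, inner_sub_left] at hB ⊢
  linarith [(abs_le.1 hB).1]
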